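/- arXiv:2310.03422 — 3 statements merged into one kernel-verified Lean document; each statement's English description precedes it below -/
import Mathlib

section
/- Let (X,F) be a nonautonomous system generated by a commutative family of homeomorphisms of a compact metric space. If x is almost periodic, then ω_k(x) is almost periodic for every k ∈ ℤ; hence every point of the orbit O(x) is almost periodic. -/
open Metric Filter

/-- Forward time maps: `posComp f n = f n ∘ ⋯ ∘ f 1`. -/
def posComp {X : Type*} [TopologicalSpace X] (f : ℕ → X ≃ₜ X) : ℕ → X → X
  | 0 => id
  | n + 1 => (f (n + 1)) ∘ posComp f n

/-- Backward time maps: `negComp f n = f 1⁻¹ ∘ ⋯ ∘ f n⁻¹`. -/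
def negComp {X : Type*} [TopologicalSpace X] (f : ℕ → X ≃ₜ X) : ℕ → X → X
  | 0 => id
  | n + 1 => negComp f n ∘ (f (n + 1)).symm

/-- The time-`n` map `ω_n` of the nonautonomous system generated by `f`. -/
def omegaMap {X : Type*} [TopologicalSpace X] (f : ℕ → X ≃ₜ X) (n : ℤ) : X → X :=
  if 0 ≤ n then posComp f n.toNat else negComp f (-n).toNat

/-- The family is commutative. -/
def Commutes {X : Type*} [TopologicalSpace X] (f : ℕ → X ≃ₜ X) : Prop :=
  ∀ i j, ∀ x : X, f i (f j x) = f j (f i x)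

/-- Orbit `O(x) = {ω_n x : n ∈ ℤ}`. -/
def orbit' {X : Type*} [TopologicalSpace X] (f : ℕ → X ≃ₜ X) (x : X) : Set X :=
  Set.range fun n : ℤ => omegaMap f n x

/-- Orbital hull `O_H(x) = {ω_{k_n} ∘ ⋯ ∘ ω_{k_1} x : k_i ∈ ℤ}`. -/
def orbitalHull {X : Type*} [TopologicalSpace X] (f : ℕ → X ≃ₜ X) (x : X) : Set X :=
  {y | ∃ l : List ℤ, y = l.foldr (fun k z => omegaMap f k z) x}

/-- Truncated orbital hull of order `k`. -/
def truncHull {X : Type*} [TopologicalSpace X] (f : ℕ → X ≃ₜ X) (k : ℕ) (x : X) : Set X :=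
  {y | ∃ l : List ℤ, (∀ r ∈ l, |r| ≤ (k : ℤ)) ∧ y = l.foldr (fun j z => omegaMap f j z) x}

/-- `x` is periodic of period `r`: `ω_{n r} x = x` for all `n ∈ ℤ`. -/
def PeriodicPt {X : Type*} [TopologicalSpace X] (f : ℕ → X ≃ₜ X) (r : ℕ) (x : X) : Prop :=
  ∀ n : ℤ, omegaMap f (n * r) x = x

/-- `Y` is invariant: `ω_k(Y) ⊆ Y` for all `k ∈ ℤ`. -/
def Invariant {X : Type*} [TopologicalSpace X] (f : ℕ → X ≃ₜ X) (Y : Set X) : Prop :=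
  ∀ k : ℤ, omegaMap f k '' Y ⊆ Y

/-- The system is minimal: no proper nonempty closed invariant subset. -/
def MinimalSys {X : Type*} [TopologicalSpace X] (f : ℕ → X ≃ₜ X) : Prop :=
  ∀ Y : Set X, Y.Nonempty → IsClosed Y → Invariant f Y → Y = Set.univ

/-- Equicontinuity of the system. -/
def Equicont {X : Type*} [MetricSpace X] (f : ℕ → X ≃ₜ X) : Prop :=
  ∀ ε > (0 : ℝ), ∃ δ > (0 : ℝ), ∀ a b : X, dist a b < δ →
    ∀ n : ℤ, dist (omegaMap f n a) (omegaMap f n b) < ε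

/-- `S ⊆ ℤ` is `M`-syndetic. -/
def MSyndetic (S : Set ℤ) (M : ℤ) : Prop :=
  ∀ a : ℤ, ∃ n ∈ S, a ≤ n ∧ n < a + M

/-- `x` is almost periodic. -/
def AlmostPeriodicPt {X : Type*} [MetricSpace X] (f : ℕ → X ≃ₜ X) (x : X) : Prop :=
  ∀ ε > (0 : ℝ), ∃ M : ℤ, 0 < M ∧ MSyndetic {n : ℤ | dist (omegaMap f n x) x < ε} M

/-- The system is sensitive at `x`. -/
def SensitiveAt {X : Type*} [MetricSpace X] (f : ℕ → X ≃ₜ X) (x : X) : Prop :=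
  ∃ δ > (0 : ℝ), ∀ U : Set X, IsOpen U → x ∈ U → ∃ m : ℤ, δ < diam (omegaMap f m '' U)

/-- Topological transitivity. -/
def TopTransitive {X : Type*} [TopologicalSpace X] (f : ℕ → X ≃ₜ X) : Prop :=
  ∀ U V : Set X, IsOpen U → IsOpen V → U.Nonempty → V.Nonempty →
    ∃ k : ℤ, ((omegaMap f k '' U) ∩ V).Nonempty

section Aux

variable {X : Type*} [MetricSpace X] (f : ℕ → X ≃ₜ X)

lemma comm_symm_right (hcomm : Commutes f) (i j : ℕ) (y : X) :
    f i ((f j).symm y) = (f j).symm (f i y) := by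
  have := hcomm i j ((f j).symm y)
  rw [(f j).apply_symm_apply] at this
  have h2 : (f j).symm (f j (f i ((f j).symm y))) = (f j).symm (f i y) := by rw [this]
  rwa [(f j).symm_apply_apply] at h2

lemma symm_comm_symm (hcomm : Commutes f) (i j : ℕ) (y : X) :
    (f i).symm ((f j).symm y) = (f j).symm ((f i).symm y) := by
  have h := comm_symm_right f hcomm j i ((f j).symm y)
  rw [(f j).apply_symm_apply] at h
  apply (f i).injective
  rw [(f i).apply_symm_apply, comm_symm_right f hcomm i j, (f i).apply_symm_apply]

lemma posComp_comm (hcomm : Commutes f) (n j : ℕ) (y : X) :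
    posComp f n (f j y) = f j (posComp f n y) ∧
    posComp f n ((f j).symm y) = (f j).symm (posComp f n y) := by
  induction n generalizing y with
  | zero => simp [posComp]
  | succ m ih =>
    constructor
    · simp only [posComp, Function.comp_apply]
      rw [(ih y).1]; exact hcomm _ _ _
    · simp only [posComp, Function.comp_apply, (ih y).2,
        comm_symm_right f hcomm]

lemma negComp_comm (hcomm : Commutes f) (n j : ℕ) (y : X) :
    negComp f n (f j y) = f j (negComp f n y) ∧
    negComp f n ((f j).symm y) = (f j).symm (negComp f n y) := by
  induction n generalizing y with
  | zero => simp [negComp]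
  | succ m ih =>
    constructor
    · simp only [negComp, Function.comp_apply]
      rw [← comm_symm_right f hcomm j (m+1) y]; exact (ih _).1
    · simp only [negComp, Function.comp_apply]
      rw [symm_comm_symm f hcomm (m+1) j y]; exact (ih _).2

lemma omegaMap_comm_f (hcomm : Commutes f) (k : ℤ) (j : ℕ) (y : X) :
    omegaMap f k (f j y) = f j (omegaMap f k y) ∧
    omegaMap f k ((f j).symm y) = (f j).symm (omegaMap f k y) := by
  unfold omegaMap
  split
  · exact posComp_comm f hcomm _ j y
  · exact negComp_comm f hcomm _ j y

lemma omegaMap_comm (hcomm : Commutes f) (n k : ℤ) (y : X) :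
    omegaMap f n (omegaMap f k y) = omegaMap f k (omegaMap f n y) := by
  have key : ∀ m : ℕ, (∀ z, omegaMap f n (posComp f m z) = posComp f m (omegaMap f n z))
      ∧ (∀ z, omegaMap f n (negComp f m z) = negComp f m (omegaMap f n z)) := by
    intro m
    induction m with
    | zero => simp [posComp, negComp]
    | succ p ih =>
      constructor
      · intro z
        simp only [posComp, Function.comp_apply]
        rw [(omegaMap_comm_f f hcomm n (p+1) (posComp f p z)).1, ih.1]
      · intro z
        simp only [negComp, Function.comp_apply]
        rw [ih.2, (omegaMap_comm_f f hcomm n (p+1) z).2]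
  by_cases hk : 0 ≤ k
  · have hk' : omegaMap f k = posComp f k.toNat := by simp [omegaMap, hk]
    rw [hk']; exact (key _).1 y
  · have hk' : omegaMap f k = negComp f (-k).toNat := by simp [omegaMap, hk]
    rw [hk']; exact (key _).2 y

lemma continuous_posComp (n : ℕ) : Continuous (posComp f n) := by
  induction n with
  | zero => exact continuous_id
  | succ m ih => exact (f (m+1)).continuous.comp ih

lemma continuous_negComp (n : ℕ) : Continuous (negComp f n) := by
  induction n with
  | zero => exact continuous_id
  | succ m ih => exact ih.comp (f (m+1)).symm.continuous

lemma continuous_omegaMap (k : ℤ) : Continuous (omegaMap f k) := by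
  unfold omegaMap
  split
  · exact continuous_posComp f _
  · exact continuous_negComp f _

end Aux

theorem stmt5 {X : Type*} [MetricSpace X] [CompactSpace X] (f : ℕ → X ≃ₜ X)
    (hcomm : Commutes f) (x : X) (hx : AlmostPeriodicPt f x) :
    (∀ k : ℤ, AlmostPeriodicPt f (omegaMap f k x)) ∧
    (∀ y ∈ orbit' f x, AlmostPeriodicPt f y) := by
  have main : ∀ k : ℤ, AlmostPeriodicPt f (omegaMap f k x) := by
    intro k ε hε
    have hu : UniformContinuous (omegaMap f k) :=
      CompactSpace.uniformContinuous_of_continuous (continuous_omegaMap f k)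
    rw [Metric.uniformContinuous_iff] at hu
    obtain ⟨δ, hδ, hδε⟩ := hu ε hε
    obtain ⟨M, hM, hsyn⟩ := hx δ hδ
    refine ⟨M, hM, fun a => ?_⟩
    obtain ⟨n, hn, h1, h2⟩ := hsyn a
    refine ⟨n, ?_, h1, h2⟩
    have : dist (omegaMap f k (omegaMap f n x)) (omegaMap f k x) < ε := hδε hn
    rwa [← omegaMap_comm f hcomm n k x] at this
  refine ⟨main, fun y hy => ?_⟩
  obtain ⟨n, rfl⟩ := hy
  exact main n
end

section
/- Let (X,F) be an equicontinuous nonautonomous system generated by a commutative family of homeomorphisms of a compact metric space. If x is almost periodic, then every point of the closure of the orbital hull O_H(x) is almost periodic. -/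
open Metric Filter

section Aux

variable {X : Type*} [TopologicalSpace X] {f : ℕ → X ≃ₜ X}

lemma comm_f_symm (hcomm : Commutes f) (i j : ℕ) (x : X) :
    f i ((f j).symm x) = (f j).symm (f i x) := by
  apply (f j).injective
  rw [Homeomorph.apply_symm_apply, ← hcomm, Homeomorph.apply_symm_apply]

lemma comm_symm_symm (hcomm : Commutes f) (i j : ℕ) (x : X) :
    (f i).symm ((f j).symm x) = (f j).symm ((f i).symm x) := by
  apply (f i).injective
  rw [Homeomorph.apply_symm_apply, comm_f_symm hcomm, Homeomorph.apply_symm_apply]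

lemma pos_comm_f (hcomm : Commutes f) (n j : ℕ) : ∀ x : X,
    posComp f n (f j x) = f j (posComp f n x) := by
  induction n with
  | zero => intro x; rfl
  | succ n ih =>
    intro x
    show f (n+1) (posComp f n (f j x)) = f j (f (n+1) (posComp f n x))
    rw [ih, hcomm]

lemma pos_comm_symm (hcomm : Commutes f) (n j : ℕ) : ∀ x : X,
    posComp f n ((f j).symm x) = (f j).symm (posComp f n x) := by
  induction n with
  | zero => intro x; rfl
  | succ n ih =>
    intro x
    show f (n+1) (posComp f n ((f j).symm x)) = (f j).symm (f (n+1) (posComp f n x))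
    rw [ih, comm_f_symm hcomm]

lemma neg_comm_f (hcomm : Commutes f) (n j : ℕ) : ∀ x : X,
    negComp f n (f j x) = f j (negComp f n x) := by
  induction n with
  | zero => intro x; rfl
  | succ n ih =>
    intro x
    show negComp f n ((f (n+1)).symm (f j x)) = f j (negComp f n ((f (n+1)).symm x))
    rw [← comm_f_symm hcomm j (n+1) x, ih]

lemma neg_comm_symm (hcomm : Commutes f) (n j : ℕ) : ∀ x : X,
    negComp f n ((f j).symm x) = (f j).symm (negComp f n x) := by
  induction n with
  | zero => intro x; rfl
  | succ n ih =>
    intro x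
    show negComp f n ((f (n+1)).symm ((f j).symm x))
      = (f j).symm (negComp f n ((f (n+1)).symm x))
    rw [comm_symm_symm hcomm, ih]

lemma pos_comm_pos (hcomm : Commutes f) (n m : ℕ) : ∀ x : X,
    posComp f n (posComp f m x) = posComp f m (posComp f n x) := by
  induction m with
  | zero => intro x; rfl
  | succ m ih =>
    intro x
    show posComp f n (f (m+1) (posComp f m x)) = f (m+1) (posComp f m (posComp f n x))
    rw [pos_comm_f hcomm, ih]

lemma pos_comm_neg (hcomm : Commutes f) (n m : ℕ) : ∀ x : X,
    posComp f n (negComp f m x) = negComp f m (posComp f n x) := by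
  induction m with
  | zero => intro x; rfl
  | succ m ih =>
    intro x
    show posComp f n (negComp f m ((f (m+1)).symm x))
      = negComp f m ((f (m+1)).symm (posComp f n x))
    rw [ih, pos_comm_symm hcomm]

lemma neg_comm_neg (hcomm : Commutes f) (n m : ℕ) : ∀ x : X,
    negComp f n (negComp f m x) = negComp f m (negComp f n x) := by
  induction m with
  | zero => intro x; rfl
  | succ m ih =>
    intro x
    show negComp f n (negComp f m ((f (m+1)).symm x))
      = negComp f m ((f (m+1)).symm (negComp f n x))
    rw [ih, neg_comm_symm hcomm]

lemma omega_comm (hcomm : Commutes f) (n k : ℤ) (x : X) :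
    omegaMap f n (omegaMap f k x) = omegaMap f k (omegaMap f n x) := by
  unfold omegaMap
  split_ifs with h1 h2 h2
  · exact pos_comm_pos hcomm _ _ x
  · exact pos_comm_neg hcomm _ _ x
  · exact (pos_comm_neg hcomm _ _ x).symm
  · exact neg_comm_neg hcomm _ _ x

lemma foldr_omega_comm (hcomm : Commutes f) (n : ℤ) (l : List ℤ) (x : X) :
    omegaMap f n (l.foldr (fun k z => omegaMap f k z) x)
      = l.foldr (fun k z => omegaMap f k z) (omegaMap f n x) := by
  induction l with
  | nil => rfl
  | cons k l ih =>
    show omegaMap f n (omegaMap f k _) = omegaMap f k _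
    rw [omega_comm hcomm, ih]

end Aux

lemma foldr_cont {X : Type*} [MetricSpace X] {f : ℕ → X ≃ₜ X} (heq : Equicont f)
    (l : List ℤ) : ∀ ε > (0 : ℝ), ∃ δ > (0 : ℝ), ∀ a b : X, dist a b < δ →
      dist (l.foldr (fun k z => omegaMap f k z) a) (l.foldr (fun k z => omegaMap f k z) b) < ε := by
  induction l with
  | nil => exact fun ε hε => ⟨ε, hε, fun a b h => h⟩
  | cons k l ih =>
    intro ε hε
    obtain ⟨δ₁, hδ₁, h₁⟩ := heq ε hε
    obtain ⟨δ, hδ, h⟩ := ih δ₁ hδ₁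
    exact ⟨δ, hδ, fun a b hab => h₁ _ _ (h a b hab) k⟩

lemma msyndetic_mono {S T : Set ℤ} {M : ℤ} (h : S ⊆ T) (hS : MSyndetic S M) : MSyndetic T M := by
  intro a
  obtain ⟨n, hn, h1, h2⟩ := hS a
  exact ⟨n, h hn, h1, h2⟩

lemma hull_ap {X : Type*} [MetricSpace X] {f : ℕ → X ≃ₜ X}
    (hcomm : Commutes f) (heq : Equicont f) {x : X} (hx : AlmostPeriodicPt f x)
    {z : X} (hz : z ∈ orbitalHull f x) : AlmostPeriodicPt f z := by
  obtain ⟨l, rfl⟩ := hz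
  intro ε hε
  obtain ⟨δ, hδ, h⟩ := foldr_cont heq l ε hε
  obtain ⟨M, hM, hsyn⟩ := hx δ hδ
  refine ⟨M, hM, msyndetic_mono ?_ hsyn⟩
  intro n hn
  simp only [Set.mem_setOf_eq] at hn ⊢
  rw [foldr_omega_comm hcomm]
  exact h _ _ hn

theorem stmt7 {X : Type*} [MetricSpace X] [CompactSpace X] (f : ℕ → X ≃ₜ X)
    (hcomm : Commutes f) (heq : Equicont f) (x : X) (hx : AlmostPeriodicPt f x) :
    ∀ y ∈ closure (orbitalHull f x), AlmostPeriodicPt f y := by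
  intro y hy ε hε
  obtain ⟨δ, hδ, hδe⟩ := heq (ε/3) (by linarith)
  obtain ⟨z, hz, hzy⟩ := Metric.mem_closure_iff.mp hy (min δ (ε/3)) (by positivity)
  obtain ⟨M, hM, hsyn⟩ := hull_ap hcomm heq hx hz (ε/3) (by linarith)
  refine ⟨M, hM, msyndetic_mono ?_ hsyn⟩
  intro n hn
  simp only [Set.mem_setOf_eq] at hn ⊢
  have h1 : dist (omegaMap f n y) (omegaMap f n z) < ε/3 := by
    exact hδe _ _ (hzy.trans_le (min_le_left _ _)) n
  have h2 : dist z y < ε/3 := by rw [dist_comm]; exact hzy.trans_le (min_le_right _ _)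
  calc dist (omegaMap f n y) y ≤ dist (omegaMap f n y) (omegaMap f n z) + dist (omegaMap f n z) z + dist z y :=
        dist_triangle4 _ _ _ _
    _ < ε/3 + ε/3 + ε/3 := by linarith
    _ = ε := by ring
end

section
/- Let (X,F) be an equicontinuous nonautonomous system generated by a commutative family of homeomorphisms. For every x ∈ X and every y in the closure of the orbit O(x), the closures of the orbital hulls of x and y are equal: cl(O_H(x)) = cl(O_H(y)). -/
open Metric Filter

lemma posComp_cont {X : Type*} [TopologicalSpace X] (f : ℕ → X ≃ₜ X) (n : ℕ) :
    Continuous (posComp f n) := by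
  induction n with
  | zero => exact continuous_id
  | succ n ih => exact (f (n+1)).continuous.comp ih

lemma negComp_cont {X : Type*} [TopologicalSpace X] (f : ℕ → X ≃ₜ X) (n : ℕ) :
    Continuous (negComp f n) := by
  induction n with
  | zero => exact continuous_id
  | succ n ih => exact ih.comp (f (n+1)).symm.continuous

lemma omegaMap_cont {X : Type*} [TopologicalSpace X] (f : ℕ → X ≃ₜ X) (n : ℤ) :
    Continuous (omegaMap f n) := by
  unfold omegaMap
  split
  · exact posComp_cont f _
  · exact negComp_cont f _

lemma negComp_posComp {X : Type*} [TopologicalSpace X] (f : ℕ → X ≃ₜ X) (n : ℕ) (x : X) :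
    negComp f n (posComp f n x) = x := by
  induction n generalizing x with
  | zero => rfl
  | succ n ih =>
    show negComp f n ((f (n+1)).symm (f (n+1) (posComp f n x))) = x
    rw [Homeomorph.symm_apply_apply]; exact ih x

lemma posComp_negComp {X : Type*} [TopologicalSpace X] (f : ℕ → X ≃ₜ X) (n : ℕ) (x : X) :
    posComp f n (negComp f n x) = x := by
  induction n generalizing x with
  | zero => rfl
  | succ n ih =>
    show f (n+1) (posComp f n (negComp f n ((f (n+1)).symm x))) = x
    rw [ih]; exact Homeomorph.apply_symm_apply _ x

lemma omegaMap_neg_omegaMap {X : Type*} [TopologicalSpace X] (f : ℕ → X ≃ₜ X) (n : ℤ) (x : X) :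
    omegaMap f (-n) (omegaMap f n x) = x := by
  rcases lt_trichotomy n 0 with hn | rfl | hn
  · have h1 : omegaMap f n x = negComp f (-n).toNat x := by rw [omegaMap, if_neg (by omega)]
    have h2 : omegaMap f (-n) (negComp f (-n).toNat x) =
        posComp f (-n).toNat (negComp f (-n).toNat x) := by rw [omegaMap, if_pos (by omega)]
    rw [h1, h2]
    exact posComp_negComp f (-n).toNat x
  · simp [omegaMap, posComp]
  · have h1 : omegaMap f n x = posComp f n.toNat x := by rw [omegaMap, if_pos hn.le]
    have h2 : omegaMap f (-n) (posComp f n.toNat x) =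
        negComp f (-(-n)).toNat (posComp f n.toNat x) := by rw [omegaMap, if_neg (by omega)]
    rw [h1, h2, neg_neg]
    exact negComp_posComp f n.toNat x

lemma mem_orbitalHull_self {X : Type*} [TopologicalSpace X] (f : ℕ → X ≃ₜ X) (x : X) :
    x ∈ orbitalHull f x := ⟨[], rfl⟩

lemma orbit_subset_hull {X : Type*} [TopologicalSpace X] (f : ℕ → X ≃ₜ X) (x : X) :
    orbit' f x ⊆ orbitalHull f x := by
  rintro _ ⟨n, rfl⟩; exact ⟨[n], rfl⟩

lemma omegaMap_mem_hull {X : Type*} [TopologicalSpace X] (f : ℕ → X ≃ₜ X) (x y : X)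
    (hy : y ∈ orbitalHull f x) (k : ℤ) : omegaMap f k y ∈ orbitalHull f x := by
  obtain ⟨l, rfl⟩ := hy; exact ⟨k :: l, rfl⟩

lemma omegaMap_closure_hull {X : Type*} [TopologicalSpace X] (f : ℕ → X ≃ₜ X) (x y : X)
    (hy : y ∈ closure (orbitalHull f x)) (k : ℤ) :
    omegaMap f k y ∈ closure (orbitalHull f x) := by
  have h1 : omegaMap f k y ∈ closure (omegaMap f k '' orbitalHull f x) :=
    image_closure_subset_closure_image (omegaMap_cont f k) ⟨y, hy, rfl⟩
  refine closure_mono ?_ h1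
  rintro _ ⟨z, hz, rfl⟩; exact omegaMap_mem_hull f x z hz k

/-- If `z` is in the closure of the orbital hull of `w`, then so is its whole hull. -/
lemma hull_closure_mono {X : Type*} [TopologicalSpace X] (f : ℕ → X ≃ₜ X) (w z : X)
    (hz : z ∈ closure (orbitalHull f w)) :
    closure (orbitalHull f z) ⊆ closure (orbitalHull f w) := by
  refine closure_minimal ?_ isClosed_closure
  rintro _ ⟨l, rfl⟩
  induction l with
  | nil => exact hz
  | cons k l ih => exact omegaMap_closure_hull f w _ ih k

theorem stmt10 {X : Type*} [MetricSpace X] [CompactSpace X] (f : ℕ → X ≃ₜ X)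
    (hcomm : Commutes f) (heq : Equicont f) :
    ∀ x : X, ∀ y ∈ closure (orbit' f x),
      closure (orbitalHull f x) = closure (orbitalHull f y) := by
  intro x y hy
  have hyx : y ∈ closure (orbitalHull f x) :=
    closure_mono (orbit_subset_hull f x) hy
  have hxy : x ∈ closure (orbit' f y) := by
    rw [Metric.mem_closure_iff]
    intro ε hε
    obtain ⟨δ, hδ, hde⟩ := heq ε hε
    rw [Metric.mem_closure_iff] at hy
    obtain ⟨b, ⟨n, rfl⟩, hb⟩ := hy δ hδ
    refine ⟨omegaMap f (-n) y, ⟨-n, rfl⟩, ?_⟩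
    rw [dist_comm] at hb
    have := hde (omegaMap f n x) y hb (-n)
    rwa [omegaMap_neg_omegaMap] at this
  have hxy' : x ∈ closure (orbitalHull f y) :=
    closure_mono (orbit_subset_hull f y) hxy
  exact le_antisymm (hull_closure_mono f y x hxy') (hull_closure_mono f x y hyx)
end
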